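/- arXiv:1502.06542 — 3 statements merged into one kernel-verified Lean document; each statement's English description precedes it below -/
import Mathlib

section
/- Let G be a finite group, K a field, M a KG-module with G-invariant bilinear form, and suppose e ∈ M generates a submodule S = KG·e. If for every submodule V of M, either e ∈ V or V ⊆ S^⊥, then S ∩ S^⊥ is the unique maximal proper submodule of S, provided S ⊄ S^⊥. -/
/-!
Because every `g ∈ G` acts as an isometry of `B`, its adjoint is `g⁻¹`, so the orthogonal
complement `S^⊥` of a `KG`-submodule is again a `KG`-submodule and `S ∩ S^⊥` is a submodule
of `S`. It is proper since `S ⊄ S^⊥`. A proper submodule `V` of `S = KG·e` cannot contain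
`e`, so by hypothesis `V ⊆ S^⊥`, i.e. `V ⊆ S ∩ S^⊥`.
-/

open MonoidAlgebra

section InvariantForm

variable {K G M : Type*} [CommSemiring K] [Group G] [AddCommMonoid M] [Module K M]
  [Module (MonoidAlgebra K G) M] (B : M →ₗ[K] M →ₗ[K] K)
  (hB : ∀ (g : G) (v w : M), B (of K G g • v) (of K G g • w) = B v w)
  (S : Submodule (MonoidAlgebra K G) M)

include hB in
lemma apply_of_smul_eq_apply_inv_smul (g : G) (v w : M) :
    B (of K G g • v) w = B v (of K G g⁻¹ • w) := by
  rw [← hB g⁻¹, smul_smul, ← map_mul, inv_mul_cancel, map_one, one_smul]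

include hB in
lemma apply_smul_eq_zero_of_forall_apply_eq_zero [IsScalarTower K (MonoidAlgebra K G) M]
    (r : MonoidAlgebra K G) {x : M} (hx : ∀ s ∈ S, B x s = 0) :
    ∀ s ∈ S, B (r • x) s = 0 := by
  induction r using MonoidAlgebra.induction_on with
  | of g =>
    intro s hs
    rw [apply_of_smul_eq_apply_inv_smul B hB, hx _ (S.smul_mem _ hs)]
  | add f f' hf hf' =>
    intro s hs
    rw [add_smul, map_add, LinearMap.add_apply, hf s hs, hf' s hs, add_zero]
  | smul c f hf =>
    intro s hs
    rw [smul_assoc, map_smul, LinearMap.smul_apply, hf s hs, smul_zero]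

def invariantOrthogonal [IsScalarTower K (MonoidAlgebra K G) M] :
    Submodule (MonoidAlgebra K G) M where
  carrier := {x | ∀ s ∈ S, B x s = 0}
  add_mem' hx hy s hs := by rw [map_add, LinearMap.add_apply, hx s hs, hy s hs, add_zero]
  zero_mem' s _ := by rw [map_zero, LinearMap.zero_apply]
  smul_mem' r _ hx := apply_smul_eq_zero_of_forall_apply_eq_zero B hB S r hx

end InvariantForm

theorem unique_maximal_submodule_general (K : Type*) [Field K] (G : Type*) [Group G]
    (M : Type*) [AddCommGroup M] [Module K M] [Module (MonoidAlgebra K G) M]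
    [IsScalarTower K (MonoidAlgebra K G) M]
    (B : M →ₗ[K] M →ₗ[K] K)
    (hB : ∀ (g : G) (v w : M),
      B ((MonoidAlgebra.of K G g) • v) ((MonoidAlgebra.of K G g) • w) = B v w)
    (e : M)
    (S : Submodule (MonoidAlgebra K G) M)
    (hS : S = Submodule.span (MonoidAlgebra K G) {e})
    (hsub : ∀ V : Submodule (MonoidAlgebra K G) M,
      e ∈ V ∨ ∀ v ∈ V, ∀ s ∈ S, B v s = 0)
    (hnp : ¬ ∀ s ∈ S, ∀ s' ∈ S, B s s' = 0) :
    ∃ N : Submodule (MonoidAlgebra K G) M,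
      (∀ x : M, x ∈ N ↔ x ∈ S ∧ ∀ s ∈ S, B x s = 0) ∧
      N < S ∧
      ∀ V : Submodule (MonoidAlgebra K G) M, V < S → V ≤ N := by
  refine ⟨S ⊓ invariantOrthogonal B hB S, fun x => Iff.rfl, ?_, ?_⟩
  · exact inf_lt_left.2 fun hle => hnp fun s hs => hle hs
  · intro V hV
    rcases hsub V with he | hperp
    · have hSV : S ≤ V := hS ▸ (Submodule.span_singleton_le_iff_mem e V).2 he
      exact absurd hSV hV.not_ge
    · exact le_inf hV.le hperp

/-- If every submodule `V` of `M` either contains `e` or is contained in `S^⊥`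
(where `S = KG·e`), and `S ⊄ S^⊥`, then `S ∩ S^⊥` is the unique maximal proper
submodule of `S`. -/
theorem unique_maximal_submodule (K : Type*) [Field K] (G : Type*) [Group G] [Fintype G]
    (M : Type*) [AddCommGroup M] [Module K M] [Module (MonoidAlgebra K G) M]
    [IsScalarTower K (MonoidAlgebra K G) M]
    (B : M →ₗ[K] M →ₗ[K] K)
    (hB : ∀ (g : G) (v w : M),
      B ((MonoidAlgebra.of K G g) • v) ((MonoidAlgebra.of K G g) • w) = B v w)
    (e : M)
    (S : Submodule (MonoidAlgebra K G) M)
    (hS : S = Submodule.span (MonoidAlgebra K G) {e})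
    (hsub : ∀ V : Submodule (MonoidAlgebra K G) M,
      e ∈ V ∨ ∀ v ∈ V, ∀ s ∈ S, B v s = 0)
    (hnp : ¬ ∀ s ∈ S, ∀ s' ∈ S, B s s' = 0) :
    ∃ N : Submodule (MonoidAlgebra K G) M,
      (∀ x : M, x ∈ N ↔ x ∈ S ∧ ∀ s ∈ S, B x s = 0) ∧
      N < S ∧
      ∀ V : Submodule (MonoidAlgebra K G) M, V < S → V ≤ N :=
  unique_maximal_submodule_general K G M B hB e S hS hsub hnp
end

section
/- Let G be a finite group, K a field, S a nonzero KG-module, and suppose there exists k ∈ KG and e ∈ S with k·S ⊆ K·e, k·e = c·e for some nonzero scalar c ∈ K, and S = KG·e. Then S is indecomposable. -/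
open MonoidAlgebra

/-- If there are `k ∈ KG` and `e ∈ S` with `k·S ⊆ K·e`, `k·e = c·e` for a nonzero
scalar `c`, and `S = KG·e`, then the nonzero `KG`-module `S` is indecomposable. -/
theorem indecomposable_of_projector
    (K : Type*) [Field K] (G : Type*) [Group G] [Fintype G]
    (S : Type*) [AddCommGroup S] [Module K S] [Module (MonoidAlgebra K G) S]
    [IsScalarTower K (MonoidAlgebra K G) S]
    (hS : ∃ s : S, s ≠ 0)
    (k : MonoidAlgebra K G) (e : S)
    (hrange : ∀ s : S, ∃ c : K, k • s = c • e)
    (c : K) (hc : c ≠ 0) (hke : k • e = c • e)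
    (hgen : Submodule.span (MonoidAlgebra K G) {e} = ⊤) :
    ¬ ∃ A B : Submodule (MonoidAlgebra K G) S,
        A ⊓ B = ⊥ ∧ A ⊔ B = ⊤ ∧ A ≠ ⊥ ∧ B ≠ ⊥ := by
  rintro ⟨A, B, hAB, hABtop, hA, hB⟩
  obtain ⟨s, hs⟩ := hS
  have he : e ≠ 0 := by
    rintro rfl
    rw [Submodule.span_zero_singleton] at hgen
    exact hs (by rw [← Submodule.mem_bot (MonoidAlgebra K G), hgen]; trivial)
  have smulmem : ∀ (r : K) (M : Submodule (MonoidAlgebra K G) S) (x : S),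
      x ∈ M → r • x ∈ M := by
    intro r M x hx
    rw [← one_smul (MonoidAlgebra K G) x, ← smul_assoc]
    exact M.smul_mem _ hx
  have hetop : e ∈ A ⊔ B := by rw [hABtop]; trivial
  obtain ⟨a, ha, b, hb, hab⟩ := Submodule.mem_sup.1 hetop
  obtain ⟨ca, hca⟩ := hrange a
  obtain ⟨cb, hcb⟩ := hrange b
  have hsum : c • e = (ca + cb) • e := by
    rw [← hke]
    conv_lhs => rw [← hab]
    rw [smul_add, hca, hcb, ← add_smul]
  have hcsum : c = ca + cb := by
    have := sub_eq_zero.2 hsum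
    rw [← sub_smul] at this
    rcases smul_eq_zero.1 this with h | h
    · exact sub_eq_zero.1 h
    · exact absurd h he
  have key : ∀ (M : Submodule (MonoidAlgebra K G) S), e ∈ M → M = ⊤ := by
    intro M hM
    have h : Submodule.span (MonoidAlgebra K G) {e} ≤ M :=
      Submodule.span_le.2 (Set.singleton_subset_iff.2 hM)
    rw [hgen] at h
    exact le_antisymm le_top h
  by_cases hca0 : ca = 0
  · -- then cb = c ≠ 0, so e ∈ B
    have hcb0 : cb ≠ 0 := by
      intro h; apply hc; rw [hcsum, hca0, h, add_zero]
    have heB : e ∈ B := by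
      have : cb⁻¹ • (k • b) ∈ B := smulmem _ _ _ (B.smul_mem k hb)
      rwa [hcb, ← smul_assoc, smul_eq_mul, inv_mul_cancel₀ hcb0, one_smul] at this
    have : A = ⊥ := by rw [← hAB, key B heB, inf_top_eq]
    exact hA this
  · have heA : e ∈ A := by
      have : ca⁻¹ • (k • a) ∈ A := smulmem _ _ _ (A.smul_mem k ha)
      rwa [hca, ← smul_assoc, smul_eq_mul, inv_mul_cancel₀ hca0, one_smul] at this
    have : B = ⊥ := by rw [← hAB, key A heA, top_inf_eq]
    exact hB this
end

section
/- The map ψ_T: U(T) → K^× defined by ψ_T(u) = θ(Σ_{(i,j)∈X(T)} c_{ij}(u)), where c_{ij}(u) is the coefficient of v_i in u·v_j, is a group homomorphism. -/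
/-- The column-stabilizer-like subgroup `U(T)` of an `F^n`-tableau `T` of shape `l`
(with entries `entry (r,c)` for boxes `c < l r`): those `g` with
`g·v − v` in the span of the entries strictly left of `v`, for every entry `v`. -/
def Ugrp (F : Type*) [Field F] (n : ℕ) (l : ℕ → ℕ)
    (entry : ℕ × ℕ → (Fin n → F)) : Set (GL (Fin n) F) :=
  {g | ∀ r c, c < l r →
    (g : Matrix (Fin n) (Fin n) F).mulVec (entry (r, c)) - entry (r, c) ∈
      Submodule.span F {v | ∃ c', c' < c ∧ v = entry (r, c')}}

/-- The row-stabilizer-like subgroup `P(T)`: those `g` with `g·v` in the span of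
the entries nonstrictly right of `v` (i.e. in a column at least that of `v`). -/
def Pgrp (F : Type*) [Field F] (n : ℕ) (l : ℕ → ℕ)
    (entry : ℕ × ℕ → (Fin n → F)) : Set (GL (Fin n) F) :=
  {g | ∀ r c, c < l r →
    (g : Matrix (Fin n) (Fin n) F).mulVec (entry (r, c)) ∈
      Submodule.span F {v | ∃ r' c', c ≤ c' ∧ c' < l r' ∧ v = entry (r', c')}}

/-!
Write `c_{ij}(u)` for the coordinates of `u` in the tableau basis. Membership in `U(T)` says
that this coordinate matrix is unitriangular for the order "strictly left of, in the same row",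
and coordinates are multiplicative: `c(u₁u₂) = c(u₁) c(u₂)`. If `v_j` sits directly right of
`v_i`, no box lies strictly between them, so the only surviving terms of
`∑ₖ c_{ik}(u₁) c_{kj}(u₂)` are `k = i` and `k = j`, giving `c_{ij}(u₁u₂) = c_{ij}(u₁) + c_{ij}(u₂)`.
Summing over adjacent pairs makes the argument of `θ` additive.
-/

open Finset

section LinearIndepOn

variable {R M ι : Type*} {v : ι → M} {s : Finset ι}

theorem LinearIndepOn.eq_zero_of_sum_smul_mem_span [Semiring R] [AddCommMonoid M] [Module R M]
    (hv : LinearIndepOn R v s) {t : Finset ι} (hts : t ⊆ s) {c : ι → R}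
    (hc : ∑ i ∈ s, c i • v i ∈ Submodule.span R (v '' t)) {i : ι} (his : i ∈ s)
    (hit : i ∉ t) : c i = 0 := by
  classical
  obtain ⟨d, hd⟩ := (Submodule.mem_span_image_finset_iff_exists_fun' (R := R)).mp hc
  have hd' : ∑ i ∈ s, c i • v i = ∑ i ∈ s, (if i ∈ t then d i else 0) • v i := by
    simp only [hd, ite_smul, zero_smul, sum_ite_mem, inter_eq_right.mpr hts]
  simpa [hit] using linearIndepOn_finset_iffₛ.mp hv _ _ hd' i his

theorem LinearIndepOn.coeff_comp [CommSemiring R] [AddCommMonoid M] [Module R M]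
    (hv : LinearIndepOn R v s) {f g : M →ₗ[R] M} {a b c : ι → ι → R}
    (ha : ∀ j ∈ s, f (v j) = ∑ i ∈ s, a i j • v i)
    (hb : ∀ j ∈ s, g (v j) = ∑ i ∈ s, b i j • v i)
    (hc : ∀ j ∈ s, f (g (v j)) = ∑ i ∈ s, c i j • v i) {i j : ι} (hi : i ∈ s) (hj : j ∈ s) :
    c i j = ∑ k ∈ s, a i k * b k j := by
  have hfg : f (g (v j)) = ∑ i ∈ s, (∑ k ∈ s, a i k * b k j) • v i := by
    calc f (g (v j)) = ∑ k ∈ s, b k j • ∑ i ∈ s, a i k • v i := by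
          rw [hb j hj, map_sum]
          exact sum_congr rfl fun k hk => by rw [map_smul, ha k hk]
      _ = ∑ i ∈ s, (∑ k ∈ s, a i k * b k j) • v i := by
          simp only [smul_sum, smul_smul, sum_smul]
          rw [sum_comm]
          simp only [mul_comm]
  exact linearIndepOn_finset_iffₛ.mp hv _ _ ((hc j hj).symm.trans hfg) i hi

end LinearIndepOn

section Unitriangular

variable {R ι : Type*} [Semiring R]

structure IsUnitriangularOn (s : Finset ι) (r : ι → ι → Prop) (a : ι → ι → R) : Prop where
  diag : ∀ j ∈ s, a j j = 1
  eq_zero : ∀ i ∈ s, ∀ j ∈ s, i ≠ j → ¬r i j → a i j = 0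

theorem IsUnitriangularOn.sum_mul_eq_add {s : Finset ι} {r : ι → ι → Prop} {a b : ι → ι → R}
    (ha : IsUnitriangularOn s r a) (hb : IsUnitriangularOn s r b) {i j : ι} (hi : i ∈ s)
    (hj : j ∈ s) (hij : i ≠ j) (hcov : ∀ k ∈ s, ¬(r i k ∧ r k j)) :
    ∑ k ∈ s, a i k * b k j = a i j + b i j := by
  rw [sum_eq_add_of_mem i j hi hj hij, ha.diag i hi, hb.diag j hj, one_mul, mul_one, add_comm]
  rintro k hk ⟨hki, hkj⟩
  by_cases hik : r i k
  · rw [hb.eq_zero k hk j hj hkj fun hkj' => hcov k hk ⟨hik, hkj'⟩, mul_zero]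
  · rw [ha.eq_zero i hi k hk (Ne.symm hki) hik, zero_mul]

end Unitriangular

def StrictlyLeftOf (q b : ℕ × ℕ) : Prop := q.1 = b.1 ∧ q.2 < b.2

/-- `∑_{(i,j) ∈ X(T)} c_{ij}`, the argument of `θ` in `ψ_T`. -/
def adjacentCoeffSum {F : Type*} [AddCommMonoid F] (boxes : Finset (ℕ × ℕ))
    (c : ℕ × ℕ → ℕ × ℕ → F) : F :=
  ∑ p ∈ boxes.filter (fun p => (p.1, p.2 + 1) ∈ boxes), c p (p.1, p.2 + 1)

section Tableau

variable {F : Type*} [Field F] {n : ℕ} {l : ℕ → ℕ} {entry : ℕ × ℕ → (Fin n → F)}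
  {boxes : Finset (ℕ × ℕ)} {coeff : GL (Fin n) F → ℕ × ℕ → ℕ × ℕ → F}

theorem one_mem_Ugrp : (1 : GL (Fin n) F) ∈ Ugrp F n l entry := fun _ _ _ => by
  simp only [Units.val_one, Matrix.one_mulVec, sub_self, zero_mem]

theorem isUnitriangularOn_coeff_of_mem_Ugrp (hv : LinearIndepOn F entry (boxes : Set (ℕ × ℕ)))
    (hboxes : ∀ p : ℕ × ℕ, p ∈ boxes ↔ p.2 < l p.1)
    {u : GL (Fin n) F} (hu : u ∈ Ugrp F n l entry) {c : ℕ × ℕ → ℕ × ℕ → F}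
    (hc : ∀ b ∈ boxes,
      (u : Matrix (Fin n) (Fin n) F).mulVec (entry b) = ∑ b' ∈ boxes, c b' b • entry b') :
    IsUnitriangularOn boxes StrictlyLeftOf c := by
  classical
  suffices h : ∀ i ∈ boxes, ∀ j ∈ boxes, ¬StrictlyLeftOf i j →
      c i j - (if i = j then 1 else 0) = 0 by
    refine ⟨fun j hj => ?_, fun i hi j hj hij hr => ?_⟩
    · exact sub_eq_zero.mp (by simpa using h j hj j hj fun hjj => lt_irrefl _ hjj.2)
    · simpa [hij] using h i hi j hj hr
  intro i hi j hj hij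
  set t := boxes.filter (StrictlyLeftOf · j)
  have hspan : (u : Matrix (Fin n) (Fin n) F).mulVec (entry j) - entry j ∈
      Submodule.span F (entry '' t) := by
    refine Submodule.span_mono ?_ (hu j.1 j.2 ((hboxes j).mp hj))
    rintro _ ⟨c', hc', rfl⟩
    have hbox : (j.1, c') ∈ boxes := (hboxes _).mpr (hc'.trans ((hboxes j).mp hj))
    exact ⟨(j.1, c'), mem_filter.mpr ⟨hbox, rfl, hc'⟩, rfl⟩
  have hsum : ∑ k ∈ boxes, (c k j - if k = j then 1 else 0) • entry k =
      (u : Matrix (Fin n) (Fin n) F).mulVec (entry j) - entry j := by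
    simp only [sub_smul, sum_sub_distrib, ite_smul, one_smul, zero_smul, sum_ite_eq', hj,
      if_true, hc j hj]
  exact hv.eq_zero_of_sum_smul_mem_span (filter_subset _ _) (hsum ▸ hspan) hi
    (fun hit => hij (mem_filter.mp hit).2)

theorem coeff_mul_adjacent (hv : LinearIndepOn F entry (boxes : Set (ℕ × ℕ)))
    (hboxes : ∀ p : ℕ × ℕ, p ∈ boxes ↔ p.2 < l p.1)
    (hcoeff : ∀ u : GL (Fin n) F, ∀ b ∈ boxes,
      (u : Matrix (Fin n) (Fin n) F).mulVec (entry b) = ∑ b' ∈ boxes, coeff u b' b • entry b')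
    {u₁ u₂ : GL (Fin n) F} (hu₁ : u₁ ∈ Ugrp F n l entry) (hu₂ : u₂ ∈ Ugrp F n l entry)
    {p : ℕ × ℕ} (hp : p ∈ boxes) (hp' : (p.1, p.2 + 1) ∈ boxes) :
    coeff (u₁ * u₂) p (p.1, p.2 + 1) =
      coeff u₁ p (p.1, p.2 + 1) + coeff u₂ p (p.1, p.2 + 1) := by
  rw [hv.coeff_comp (f := (u₁ : Matrix (Fin n) (Fin n) F).mulVecLin)
    (g := (u₂ : Matrix (Fin n) (Fin n) F).mulVecLin) (c := coeff (u₁ * u₂)) (hcoeff u₁)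
    (hcoeff u₂) (fun j hj => by
      rw [Matrix.mulVecLin_apply, Matrix.mulVecLin_apply, Matrix.mulVec_mulVec, ← Units.val_mul,
        hcoeff _ j hj]) hp hp']
  refine (isUnitriangularOn_coeff_of_mem_Ugrp hv hboxes hu₁ (hcoeff u₁)).sum_mul_eq_add
    (isUnitriangularOn_coeff_of_mem_Ugrp hv hboxes hu₂ (hcoeff u₂)) hp hp'
    (by simp [Prod.ext_iff]) ?_
  rintro k - ⟨⟨-, hpk⟩, ⟨-, hkp⟩⟩
  omega

theorem adjacentCoeffSum_mul (hv : LinearIndepOn F entry (boxes : Set (ℕ × ℕ)))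
    (hboxes : ∀ p : ℕ × ℕ, p ∈ boxes ↔ p.2 < l p.1)
    (hcoeff : ∀ u : GL (Fin n) F, ∀ b ∈ boxes,
      (u : Matrix (Fin n) (Fin n) F).mulVec (entry b) = ∑ b' ∈ boxes, coeff u b' b • entry b')
    {u₁ u₂ : GL (Fin n) F} (hu₁ : u₁ ∈ Ugrp F n l entry) (hu₂ : u₂ ∈ Ugrp F n l entry) :
    adjacentCoeffSum boxes (coeff (u₁ * u₂)) =
      adjacentCoeffSum boxes (coeff u₁) + adjacentCoeffSum boxes (coeff u₂) := by
  rw [adjacentCoeffSum, adjacentCoeffSum, adjacentCoeffSum, ← sum_add_distrib]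
  refine sum_congr rfl fun p hp => ?_
  exact coeff_mul_adjacent hv hboxes hcoeff hu₁ hu₂ (mem_filter.mp hp).1 (mem_filter.mp hp).2

end Tableau

theorem psi_is_hom_general (F : Type*) [Field F] (K : Type*) [Field K]
    (θ : Multiplicative F →* Kˣ)
    (n : ℕ) (l : ℕ → ℕ)
    (entry : ℕ × ℕ → (Fin n → F))
    (hindep : LinearIndependent F (fun b : {p : ℕ × ℕ // p.2 < l p.1} => entry b.1))
    (boxes : Finset (ℕ × ℕ)) (hboxes : ∀ p : ℕ × ℕ, p ∈ boxes ↔ p.2 < l p.1)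
    (coeff : GL (Fin n) F → ℕ × ℕ → ℕ × ℕ → F)
    (hcoeff : ∀ u : GL (Fin n) F, ∀ b ∈ boxes,
      (u : Matrix (Fin n) (Fin n) F).mulVec (entry b) =
        ∑ b' ∈ boxes, coeff u b' b • entry b') :
    (fun u : GL (Fin n) F => θ (Multiplicative.ofAdd
        (∑ p ∈ boxes.filter (fun p => (p.1, p.2 + 1) ∈ boxes),
          coeff u p (p.1, p.2 + 1)))) 1 = 1 ∧
    ∀ u₁ ∈ Ugrp F n l entry, ∀ u₂ ∈ Ugrp F n l entry,
      (fun u : GL (Fin n) F => θ (Multiplicative.ofAdd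
        (∑ p ∈ boxes.filter (fun p => (p.1, p.2 + 1) ∈ boxes),
          coeff u p (p.1, p.2 + 1)))) (u₁ * u₂) =
      (fun u : GL (Fin n) F => θ (Multiplicative.ofAdd
        (∑ p ∈ boxes.filter (fun p => (p.1, p.2 + 1) ∈ boxes),
          coeff u p (p.1, p.2 + 1)))) u₁ *
      (fun u : GL (Fin n) F => θ (Multiplicative.ofAdd
        (∑ p ∈ boxes.filter (fun p => (p.1, p.2 + 1) ∈ boxes),
          coeff u p (p.1, p.2 + 1)))) u₂ := by
  have hv : LinearIndepOn F entry (boxes : Set (ℕ × ℕ)) := by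
    rwa [show (boxes : Set (ℕ × ℕ)) = {p | p.2 < l p.1} from Set.ext hboxes]
  have hmul : ∀ u₁ ∈ Ugrp F n l entry, ∀ u₂ ∈ Ugrp F n l entry,
      adjacentCoeffSum boxes (coeff (u₁ * u₂)) =
        adjacentCoeffSum boxes (coeff u₁) + adjacentCoeffSum boxes (coeff u₂) :=
    fun _ hu₁ _ hu₂ => adjacentCoeffSum_mul hv hboxes hcoeff hu₁ hu₂
  show θ (.ofAdd (adjacentCoeffSum boxes (coeff 1))) = 1 ∧
    ∀ u₁ ∈ Ugrp F n l entry, ∀ u₂ ∈ Ugrp F n l entry,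
      θ (.ofAdd (adjacentCoeffSum boxes (coeff (u₁ * u₂)))) =
        θ (.ofAdd (adjacentCoeffSum boxes (coeff u₁))) *
          θ (.ofAdd (adjacentCoeffSum boxes (coeff u₂)))
  refine ⟨?_, fun u₁ hu₁ u₂ hu₂ => by rw [hmul u₁ hu₁ u₂ hu₂, ofAdd_add, map_mul]⟩
  -- `1 ∈ U(T)` and `1 * 1 = 1`, so the sum `S` at `1` satisfies `S = S + S`.
  have hone := hmul 1 one_mem_Ugrp 1 one_mem_Ugrp
  rw [mul_one, left_eq_add] at hone
  rw [hone, ofAdd_zero, map_one]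

/-- The map `ψ_T(u) = θ(Σ_{(i,j)∈X(T)} c_{ij}(u))`, where the sum is over pairs of
horizontally adjacent boxes and `c_{ij}(u)` is the coefficient of `v_i` in `u·v_j`,
is a group homomorphism on `U(T)`. -/
theorem psi_is_hom (F : Type*) [Field F] [Fintype F] (K : Type*) [Field K]
    (θ : Multiplicative F →* Kˣ) (hθ : θ ≠ 1)
    (n : ℕ) (l : ℕ → ℕ)
    (entry : ℕ × ℕ → (Fin n → F))
    (hindep : LinearIndependent F (fun b : {p : ℕ × ℕ // p.2 < l p.1} => entry b.1))
    (boxes : Finset (ℕ × ℕ)) (hboxes : ∀ p : ℕ × ℕ, p ∈ boxes ↔ p.2 < l p.1)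
    (coeff : GL (Fin n) F → ℕ × ℕ → ℕ × ℕ → F)
    (hcoeff : ∀ u : GL (Fin n) F, ∀ b ∈ boxes,
      (u : Matrix (Fin n) (Fin n) F).mulVec (entry b) =
        ∑ b' ∈ boxes, coeff u b' b • entry b') :
    (fun u : GL (Fin n) F => θ (Multiplicative.ofAdd
        (∑ p ∈ boxes.filter (fun p => (p.1, p.2 + 1) ∈ boxes),
          coeff u p (p.1, p.2 + 1)))) 1 = 1 ∧
    ∀ u₁ ∈ Ugrp F n l entry, ∀ u₂ ∈ Ugrp F n l entry,
      (fun u : GL (Fin n) F => θ (Multiplicative.ofAdd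
        (∑ p ∈ boxes.filter (fun p => (p.1, p.2 + 1) ∈ boxes),
          coeff u p (p.1, p.2 + 1)))) (u₁ * u₂) =
      (fun u : GL (Fin n) F => θ (Multiplicative.ofAdd
        (∑ p ∈ boxes.filter (fun p => (p.1, p.2 + 1) ∈ boxes),
          coeff u p (p.1, p.2 + 1)))) u₁ *
      (fun u : GL (Fin n) F => θ (Multiplicative.ofAdd
        (∑ p ∈ boxes.filter (fun p => (p.1, p.2 + 1) ∈ boxes),
          coeff u p (p.1, p.2 + 1)))) u₂ :=
  psi_is_hom_general F K θ n l entry hindep boxes hboxes coeff hcoeff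
end
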